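/- arXiv:2303.03650 — 2 statements merged into one kernel-verified Lean document; each statement's English description precedes it below -/
import Mathlib

section
/- Bisection property of the f-divergence: Let f : [0,∞) → [0,∞) be convex with f(1) = 0 and let M, L ∈ ℒ. Then D_f(L||M) = D_f(L_π||M_π). In particular, if M ∈ ℒ(π), then D_f(L||M) = D_f(L_π||M) and D_f(M||L) = D_f(M||L_π). -/
open Finset

noncomputable section

variable {X : Type*} [Fintype X] [DecidableEq X]

/-- Build a matrix with prescribed off-diagonal entries and diagonal entries
chosen so that every row sums to zero. -/
def rowZero (F : X → X → ℝ) : X → X → ℝ :=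
  fun x y => if x = y then -(∑ z ∈ Finset.univ.erase x, F x z) else F x y

/-- `L` is a Markov infinitesimal generator: nonnegative off-diagonal entries
and zero row sums. -/
def IsGen (L : X → X → ℝ) : Prop :=
  (∀ x y, x ≠ y → 0 ≤ L x y) ∧ (∀ x, ∑ y, L x y = 0)

/-- `L` is a `π`-reversible Markov generator, i.e. `L ∈ ℒ(π)`. -/
def IsRev (π : X → ℝ) (L : X → X → ℝ) : Prop :=
  IsGen L ∧ ∀ x y, π x * L x y = π y * L y x

/-- `π` is a probability distribution with full support. -/
def IsProb (π : X → ℝ) : Prop := (∀ x, 0 < π x) ∧ ∑ x, π x = 1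

/-- The `π`-dual `L_π` of `L`: off-diagonal entries `π(y)L(y,x)/π(x)`,
diagonal entries make row sums zero. -/
def dual (π : X → ℝ) (L : X → X → ℝ) : X → X → ℝ :=
  rowZero (fun x y => π y * L y x / π x)

/-- The `f`-divergence between generators: `Df f π M L = D_f(M‖L)`.
(The convention `0·f(a/0) = 0` holds automatically since `a/0 = 0` and
the factor `L x y = 0` kills the term.) -/
def Df (f : ℝ → ℝ) (π : X → ℝ) (M L : X → X → ℝ) : ℝ :=
  ∑ x, π x * ∑ y ∈ Finset.univ.erase x, L x y * f (M x y / L x y)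

lemma Df_dual_aux (π : X → ℝ) (hπ : ∀ x, 0 < π x) (f : ℝ → ℝ) (L M : X → X → ℝ) :
    Df f π (dual π L) (dual π M) = Df f π L M := by
  unfold Df
  simp only [Finset.mul_sum]
  have key : ∀ x y : X, y ≠ x →
      π x * (dual π M x y * f (dual π L x y / dual π M x y))
        = π y * (M y x * f (L y x / M y x)) := by
    intro x y hxy
    have hx := (hπ x).ne'
    have hy := (hπ y).ne'
    have hd : ∀ A : X → X → ℝ, dual π A x y = π y * A y x / π x := by
      intro A
      simp [dual, rowZero, Ne.symm hxy]
    rw [hd, hd]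
    rcases eq_or_ne (M y x) 0 with h0 | h0
    · simp [h0]
    · have harg : π y * L y x / π x / (π y * M y x / π x) = L y x / M y x := by
        field_simp
      rw [harg]
      field_simp
  calc ∑ x, ∑ y ∈ Finset.univ.erase x,
        π x * (dual π M x y * f (dual π L x y / dual π M x y))
      = ∑ x, ∑ y ∈ Finset.univ.erase x, π y * (M y x * f (L y x / M y x)) := by
        refine Finset.sum_congr rfl fun x _ => Finset.sum_congr rfl fun y hy => ?_
        exact key x y (Finset.ne_of_mem_erase hy)
    _ = ∑ y, ∑ x ∈ Finset.univ.erase y, π y * (M y x * f (L y x / M y x)) := by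
        apply Finset.sum_comm'
        intro x y
        simp [Finset.mem_erase, ne_comm]
    _ = _ := rfl

lemma dual_offdiag_of_rev (π : X → ℝ) (hπ : ∀ x, 0 < π x) (M : X → X → ℝ)
    (hM : IsRev π M) {x y : X} (hxy : x ≠ y) : dual π M x y = M x y := by
  have hx := (hπ x).ne'
  have h := hM.2 x y
  simp only [dual, rowZero, if_neg hxy]
  rw [← h]
  field_simp

lemma Df_congr_offdiag (f : ℝ → ℝ) (π : X → ℝ) (A B A' B' : X → X → ℝ)
    (hA : ∀ x y, x ≠ y → A x y = A' x y) (hB : ∀ x y, x ≠ y → B x y = B' x y) :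
    Df f π A B = Df f π A' B' := by
  unfold Df
  refine Finset.sum_congr rfl fun x _ => ?_
  congr 1
  refine Finset.sum_congr rfl fun y hy => ?_
  have hxy : x ≠ y := (Finset.ne_of_mem_erase hy).symm
  rw [hA x y hxy, hB x y hxy]

/-- **Bisection property of `D_f`** (Theorem 3.1):
`D_f(L‖M) = D_f(L_π‖M_π)`; in particular, if `M ∈ ℒ(π)`, then
`D_f(L‖M) = D_f(L_π‖M)` and `D_f(M‖L) = D_f(M‖L_π)`. -/
theorem bisection_Df (π : X → ℝ) (hπ : IsProb π) (f : ℝ → ℝ)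
    (hconv : ConvexOn ℝ (Set.Ici (0 : ℝ)) f) (hnonneg : ∀ t, 0 ≤ t → 0 ≤ f t)
    (hf1 : f 1 = 0)
    (L M : X → X → ℝ) (hL : IsGen L) (hM : IsGen M) :
    Df f π L M = Df f π (dual π L) (dual π M) ∧
      (IsRev π M →
        Df f π L M = Df f π (dual π L) M ∧ Df f π M L = Df f π M (dual π L)) := by
  have hpos := hπ.1
  have h1 : Df f π L M = Df f π (dual π L) (dual π M) := (Df_dual_aux π hpos f L M).symm
  refine ⟨h1, fun hrev => ?_⟩
  constructor
  · rw [h1]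
    exact Df_congr_offdiag f π _ _ _ _ (fun _ _ _ => rfl)
      (fun x y hxy => dual_offdiag_of_rev π hpos M hrev hxy)
  · rw [← Df_dual_aux π hpos f M L]
    exact Df_congr_offdiag f π _ _ _ _
      (fun x y hxy => dual_offdiag_of_rev π hpos M hrev hxy) (fun _ _ _ => rfl)

end
end

section
/- Bisection property of D̄_f: Let f : [0,∞) → [0,∞) be convex with f(1) = 0 and let M, L ∈ ℒ. Then D̄_f(L||M) = D̄_f(L_π||M_π). In particular, if M ∈ ℒ(π), then D̄_f(L||M) = D̄_f(L_π||M). -/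
open Finset

noncomputable section

variable {X : Type*} [Fintype X] [DecidableEq X]

/-- `D̄_f(L‖M) := D_f(L‖(L+M)/2)`. -/
def Dbar (f : ℝ → ℝ) (π : X → ℝ) (L M : X → X → ℝ) : ℝ :=
  Df f π L (fun x y => (L x y + M x y) / 2)

theorem sum_sum_erase_comm {β : Type*} [AddCommMonoid β] (h : X → X → β) :
    ∑ x, ∑ y ∈ univ.erase x, h x y = ∑ y, ∑ x ∈ univ.erase y, h x y :=
  Finset.sum_comm' fun x y => by simp [ne_comm]

theorem rowZero_apply_of_ne (F : X → X → ℝ) {x y : X} (h : x ≠ y) :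
    rowZero F x y = F x y :=
  if_neg h

theorem dual_apply_of_ne (π : X → ℝ) (K : X → X → ℝ) {x y : X} (h : x ≠ y) :
    dual π K x y = π y * K y x / π x :=
  rowZero_apply_of_ne _ h

theorem dual_apply_of_ne_of_reversible {π : X → ℝ} (hπ : ∀ x, π x ≠ 0) {K : X → X → ℝ}
    (hK : ∀ x y, π x * K x y = π y * K y x) {x y : X} (h : x ≠ y) :
    dual π K x y = K x y := by
  rw [dual_apply_of_ne π K h, ← hK, mul_div_cancel_left₀ _ (hπ x)]

theorem Df_congr_offDiag (f : ℝ → ℝ) (π : X → ℝ) {M M' L L' : X → X → ℝ}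
    (hM : ∀ x y, x ≠ y → M x y = M' x y) (hL : ∀ x y, x ≠ y → L x y = L' x y) :
    Df f π M L = Df f π M' L' := by
  unfold Df
  refine sum_congr rfl fun x _ => congrArg _ <| sum_congr rfl fun y hy => ?_
  have hxy : x ≠ y := (ne_of_mem_erase hy).symm
  rw [hM x y hxy, hL x y hxy]

theorem Dbar_congr_offDiag (f : ℝ → ℝ) (π : X → ℝ) {L L' M M' : X → X → ℝ}
    (hL : ∀ x y, x ≠ y → L x y = L' x y) (hM : ∀ x y, x ≠ y → M x y = M' x y) :
    Dbar f π L M = Dbar f π L' M' :=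
  Df_congr_offDiag f π hL fun x y h => by rw [hL x y h, hM x y h]

/-- Under `(x, y) ↦ (y, x)` the `π x`-weighted term of `D_f(M_π‖L_π)` is the `π y`-weighted
term of `D_f(M‖L)`. -/
theorem Df_dual (f : ℝ → ℝ) {π : X → ℝ} (hπ : ∀ x, π x ≠ 0) (M L : X → X → ℝ) :
    Df f π (dual π M) (dual π L) = Df f π M L := by
  have term : ∀ x y, x ≠ y →
      π x * (dual π L x y * f (dual π M x y / dual π L x y)) =
        π y * (L y x * f (M y x / L y x)) := fun x y h => by
    rw [dual_apply_of_ne π L h, dual_apply_of_ne π M h, div_div_div_cancel_right₀ (hπ x),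
      mul_div_mul_left _ _ (hπ y)]
    field_simp [hπ x]
  calc Df f π (dual π M) (dual π L)
      = ∑ x, ∑ y ∈ univ.erase x, π y * (L y x * f (M y x / L y x)) := by
        refine sum_congr rfl fun x _ => ?_
        rw [mul_sum]
        exact sum_congr rfl fun y hy => term x y (ne_of_mem_erase hy).symm
    _ = Df f π M L := by
        rw [sum_sum_erase_comm]
        exact sum_congr rfl fun y _ => (mul_sum _ _ _).symm

theorem Dbar_dual (f : ℝ → ℝ) {π : X → ℝ} (hπ : ∀ x, π x ≠ 0) (L M : X → X → ℝ) :
    Dbar f π (dual π L) (dual π M) = Dbar f π L M := by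
  have hmid : ∀ x y, x ≠ y → (dual π L x y + dual π M x y) / 2 =
      dual π (fun x y => (L x y + M x y) / 2) x y := fun x y h => by
    simp only [dual_apply_of_ne π _ h]
    ring
  rw [Dbar, Df_congr_offDiag f π (fun _ _ _ => rfl) hmid, Df_dual f hπ]
  rfl

theorem bisection_Dbar_general (π : X → ℝ) (hπ : IsProb π) (f : ℝ → ℝ)
    (L M : X → X → ℝ) :
    Dbar f π L M = Dbar f π (dual π L) (dual π M) ∧
      (IsRev π M → Dbar f π L M = Dbar f π (dual π L) M) := by
  have hπ₀ : ∀ x, π x ≠ 0 := fun x => (hπ.1 x).ne'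
  refine ⟨(Dbar_dual f hπ₀ L M).symm, fun hMrev => ?_⟩
  rw [← Dbar_dual f hπ₀ L M]
  exact Dbar_congr_offDiag f π (fun _ _ _ => rfl) fun x y h =>
    dual_apply_of_ne_of_reversible hπ₀ hMrev.2 h

/-- **Bisection property of `D̄_f`** (Theorem 3.2):
`D̄_f(L‖M) = D̄_f(L_π‖M_π)`; in particular, if `M ∈ ℒ(π)`, then
`D̄_f(L‖M) = D̄_f(L_π‖M)`. -/
theorem bisection_Dbar (π : X → ℝ) (hπ : IsProb π) (f : ℝ → ℝ)
    (hconv : ConvexOn ℝ (Set.Ici (0 : ℝ)) f) (hnonneg : ∀ t, 0 ≤ t → 0 ≤ f t)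
    (hf1 : f 1 = 0)
    (L M : X → X → ℝ) (hL : IsGen L) (hM : IsGen M) :
    Dbar f π L M = Dbar f π (dual π L) (dual π M) ∧
      (IsRev π M → Dbar f π L M = Dbar f π (dual π L) M) :=
  bisection_Dbar_general π hπ f L M

end
end
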